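/- arXiv:2103.17221 — 3 statements merged into one kernel-verified Lean document; each statement's English description precedes it below -/
import Mathlib

section
/- Let V be a finite set of nodes, M a finite family of subsets of V (the monitoring paths), k ≥ 1 a natural number, and F ⊆ V the set of failed nodes with |F| = k. Suppose v ∈ F is k-identifiable with respect to M, i.e., for any two subsets F₁, F₂ ⊆ V with |F₁| ≤ k and |F₂| ≤ k such that v belongs to exactly one of F₁ and F₂, the collections {m ∈ M : m ∩ F₁ ≠ ∅} and {m ∈ M : m ∩ F₂ ≠ ∅} are distinct. Then there exists a path m ∈ M such that m ∩ F = {v}, i.e., m passes through v and through no other failed node. -/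
/-!
Compare the true failure set `F` with `F.erase v`: both have at most `k` elements and differ
exactly at `v`, so by identifiability they fail different sets of paths. Since removing a node
can only repair paths, some path fails under `F` but not under `F.erase v`; it meets `F`, and
only in `v`.
-/

namespace Finset

variable {V : Type*} [DecidableEq V]

def failedPaths (M : Finset (Finset V)) (F : Finset V) : Finset (Finset V) :=
  M.filter fun m => (m ∩ F).Nonempty

theorem failedPaths_mono (M : Finset (Finset V)) {F₁ F₂ : Finset V} (h : F₁ ⊆ F₂) :
    failedPaths M F₁ ⊆ failedPaths M F₂ :=
  monotone_filter_right M fun _ _ hm => hm.mono (inter_subset_inter_left h)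

theorem inter_eq_singleton_of_nonempty_of_inter_erase_eq_empty {m F : Finset V} {v : V}
    (hne : (m ∩ F).Nonempty) (hempty : m ∩ F.erase v = ∅) : m ∩ F = {v} := by
  rw [inter_erase, erase_eq_empty_iff] at hempty
  exact hempty.resolve_left hne.ne_empty

theorem exists_inter_eq_singleton_of_failedPaths_erase_ne {M : Finset (Finset V)} {F : Finset V}
    {v : V} (h : failedPaths M (F.erase v) ≠ failedPaths M F) : ∃ m ∈ M, m ∩ F = {v} := by
  obtain ⟨m, hmF, hmErase⟩ :=
    exists_of_ssubset ((failedPaths_mono M (erase_subset v F)).ssubset_of_ne h)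
  rw [failedPaths, mem_filter] at hmF hmErase
  exact ⟨m, hmF.1, inter_eq_singleton_of_nonempty_of_inter_erase_eq_empty hmF.2
    (not_nonempty_iff_eq_empty.mp fun hne => hmErase ⟨hmF.1, hne⟩)⟩

end Finset

theorem stmt_3_general {V : Type*} [DecidableEq V]
    (M : Finset (Finset V)) (k : ℕ)
    (F : Finset V) (hF : F.card = k) (v : V) (hv : v ∈ F)
    (hident : ∀ F₁ F₂ : Finset V, F₁.card ≤ k → F₂.card ≤ k →
      Xor' (v ∈ F₁) (v ∈ F₂) →
      M.filter (fun m => (m ∩ F₁).Nonempty) ≠ M.filter (fun m => (m ∩ F₂).Nonempty)) :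
    ∃ m ∈ M, m ∩ F = {v} := by
  have hcard : (F.erase v).card ≤ k := hF ▸ Finset.card_erase_le
  have hxor : Xor' (v ∈ F.erase v) (v ∈ F) := Or.inr ⟨hv, Finset.notMem_erase v F⟩
  exact Finset.exists_inter_eq_singleton_of_failedPaths_erase_ne (hident _ _ hcard hF.le hxor)

/-- If `v` is a failed node of the failure set `F` (`|F| = k`, `k ≥ 1`)
and `v` is `k`-identifiable with respect to the family of monitoring paths `M`
(any two candidate failure sets of size at most `k` differing at `v` cause different
sets of failed paths), then some path `m ∈ M` satisfies `m ∩ F = {v}`. -/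
theorem stmt_3 {V : Type*} [Fintype V] [DecidableEq V]
    (M : Finset (Finset V)) (k : ℕ) (hk : 1 ≤ k)
    (F : Finset V) (hF : F.card = k) (v : V) (hv : v ∈ F)
    (hident : ∀ F₁ F₂ : Finset V, F₁.card ≤ k → F₂.card ≤ k →
      Xor' (v ∈ F₁) (v ∈ F₂) →
      M.filter (fun m => (m ∩ F₁).Nonempty) ≠ M.filter (fun m => (m ∩ F₂).Nonempty)) :
    ∃ m ∈ M, m ∩ F = {v} :=
  stmt_3_general M k F hF v hv hident
end

section
/- Fix p ∈ (0,1] and d ∈ ℕ, and consider the product probability measure on Bool^(Fin (2d+1)) in which each coordinate independently equals true ('failed') with probability p and false ('working') with probability 1 − p. Coordinate 0 represents a node v and, for each i ∈ Fin d, the i-th path through v fails exactly when coordinate 0 is true, or coordinate 2i+1 is true, or coordinate 2i+2 is true. Let E be the event that all d paths fail. Then P(E) = p + (1 − p)(2p − p²)^d, and the conditional probability that coordinate 0 is true given E equals p / (p + (1 − p)(2p − p²)^d), which equals p / (1 + (1 − p)((2p − p²)^d − 1)). -/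
open MeasureTheory Finset
open scoped ENNReal

lemma prod_split_aux {M : Type*} [CommMonoid M] (d : ℕ) (f : ℕ → M) :
    ∏ i ∈ range (2 * d + 1), f i = f 0 * ∏ i ∈ range d, (f (2 * i + 1) * f (2 * i + 2)) := by
  induction d with
  | zero => simp
  | succ d ih =>
    have h : 2 * (d + 1) + 1 = (2 * d + 1) + 1 + 1 := by ring
    rw [h, prod_range_succ, prod_range_succ, ih, prod_range_succ, mul_assoc, mul_assoc]

def enc (d : ℕ) (b : Bool) (g : Fin d → Bool × Bool) : Fin (2 * d + 1) → Bool :=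
  fun j => if h : j.val = 0 then b
    else if h1 : j.val % 2 = 1 then (g ⟨j.val / 2, by omega⟩).1
    else (g ⟨j.val / 2 - 1, by omega⟩).2

lemma enc_zero (d : ℕ) (b : Bool) (g : Fin d → Bool × Bool) : enc d b g 0 = b := rfl

@[simp] lemma enc_odd (d : ℕ) (b : Bool) (g : Fin d → Bool × Bool) (i : Fin d)
    (h : 2 * i.val + 1 < 2 * d + 1) :
    enc d b g ⟨2 * i.val + 1, h⟩ = (g i).1 := by
  simp only [enc]
  rw [dif_neg (by omega), dif_pos (by omega)]
  exact congrArg (fun x => (g x).1) (Fin.ext (show (2 * i.val + 1) / 2 = i.val by omega))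

@[simp] lemma enc_even (d : ℕ) (b : Bool) (g : Fin d → Bool × Bool) (i : Fin d)
    (h : 2 * i.val + 2 < 2 * d + 1) :
    enc d b g ⟨2 * i.val + 2, h⟩ = (g i).2 := by
  simp only [enc]
  rw [dif_neg (by omega), dif_neg (by show ¬ (2 * i.val + 2) % 2 = 1; omega)]
  exact congrArg (fun x => (g x).2) (Fin.ext (show (2 * i.val + 2) / 2 - 1 = i.val by omega))

def encEquiv (d : ℕ) : Bool × (Fin d → Bool × Bool) ≃ (Fin (2 * d + 1) → Bool) where
  toFun t := enc d t.1 t.2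
  invFun ω := (ω 0, fun i => (ω ⟨2 * i.val + 1, by linarith [i.isLt]⟩,
    ω ⟨2 * i.val + 2, by linarith [i.isLt]⟩))
  left_inv t := by
    obtain ⟨b, g⟩ := t
    refine Prod.ext (enc_zero d b g) (funext fun i => Prod.ext ?_ ?_)
    · exact enc_odd d b g i _
    · exact enc_even d b g i _
  right_inv ω := by
    funext j
    rcases j with ⟨j, hj⟩
    show (if h : j = 0 then ω 0 else if h1 : j % 2 = 1 then ω ⟨2 * (j / 2) + 1, _⟩
      else ω ⟨2 * (j / 2 - 1) + 2, _⟩) = ω ⟨j, hj⟩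
    split_ifs with h0 h1 <;> (congr 1; apply Fin.ext)
    · simp [h0]
    · show 2 * (j / 2) + 1 = j; omega
    · show 2 * (j / 2 - 1) + 2 = j; omega

/-- With `2d+1` independent Bernoulli(p) node states (`p ∈ (0,1]`;
coordinate 0 is the node `v`, coordinates `2i+1`, `2i+2` the other two nodes of the
`i`-th length-3 path through `v`), the probability that all `d` paths fail is
`p + (1 − p)(2p − p²)^d`, and the conditional probability that `v` is failed given
this event is `p / (p + (1 − p)(2p − p²)^d) = p / (1 + (1 − p)((2p − p²)^d − 1))`. -/
theorem stmt_8 (d : ℕ) (p : ℝ) (hp0 : 0 < p) (hp1 : p ≤ 1)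
    (μ : Measure (Fin (2 * d + 1) → Bool))
    (hμ : μ = Measure.pi (fun _ : Fin (2 * d + 1) =>
      (PMF.bernoulli (Real.toNNReal p) (Real.toNNReal_le_one.mpr hp1)).toMeasure))
    (E : Set (Fin (2 * d + 1) → Bool))
    (hE : E = {ω | ∀ i : Fin d,
      ω 0 = true ∨ ω ⟨2 * i.val + 1, by have := i.isLt; omega⟩ = true ∨
        ω ⟨2 * i.val + 2, by have := i.isLt; omega⟩ = true}) :
    μ E = ENNReal.ofReal (p + (1 - p) * (2 * p - p ^ 2) ^ d) ∧
    ProbabilityTheory.cond μ E {ω | ω 0 = true}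
      = ENNReal.ofReal (p / (p + (1 - p) * (2 * p - p ^ 2) ^ d)) ∧
    p / (p + (1 - p) * (2 * p - p ^ 2) ^ d)
      = p / (1 + (1 - p) * ((2 * p - p ^ 2) ^ d - 1)) := by
    classical
  set q : ℝ≥0∞ := ENNReal.ofReal p with hqdef
  have hq1 : q ≤ 1 := ENNReal.ofReal_le_one.mpr hp1
  set B : Bool → ℝ≥0∞ := fun b => bif b then q else 1 - q with hBdef
  have h1p : (0:ℝ) ≤ 1 - p := by linarith
  have h2p : (0:ℝ) ≤ 2 * p - p ^ 2 := by nlinarith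
  have hone : (1 : ℝ≥0∞) - q = ENNReal.ofReal (1 - p) := by
    rw [ENNReal.ofReal_sub 1 hp0.le, ENNReal.ofReal_one]
  -- singleton measure
  have hsing : ∀ ω : Fin (2 * d + 1) → Bool, μ {ω} = ∏ i, B (ω i) := by
    intro ω
    have hset : ({ω} : Set (Fin (2 * d + 1) → Bool)) = Set.pi Set.univ (fun i => {ω i}) := by
      ext x; simp [funext_iff, Set.mem_pi]
    rw [hμ, hset, Measure.pi_pi]
    refine Finset.prod_congr rfl fun i _ => ?_
    rw [PMF.toMeasure_apply_singleton _ _ (by trivial)]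
    cases ω i <;> rfl
  have hmeas : ∀ s : Set (Fin (2 * d + 1) → Bool), MeasurableSet s :=
    fun s => s.toFinite.measurableSet
  -- measure as a finite sum
  have hsum : ∀ s : Set (Fin (2 * d + 1) → Bool),
      μ s = ∑ ω : Fin (2 * d + 1) → Bool, (if ω ∈ s then ∏ i, B (ω i) else 0) := by
    intro s
    have h1 : s = ⋃ x ∈ Finset.univ.filter (· ∈ s), ({x} : Set _) := by
      ext x; simp
    rw [h1, measure_biUnion_finset ?_ (fun x _ => hmeas {x})]
    · rw [Finset.sum_filter]
      exact Finset.sum_congr rfl fun x _ => by by_cases hx : x ∈ s <;> simp [hx, hsing x]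
    · intro x _ y _ hxy; simp [Set.disjoint_singleton, hxy]
  -- factorization of the product over coordinates
  have hfact : ∀ (b : Bool) (g : Fin d → Bool × Bool),
      ∏ i, B (enc d b g i) = B b * ∏ i : Fin d, (B (g i).1 * B (g i).2) := by
    intro b g
    set f : ℕ → ℝ≥0∞ := fun j => if h : j < 2 * d + 1 then B (enc d b g ⟨j, h⟩) else 1 with hf
    have h1 : ∏ i, B (enc d b g i) = ∏ i : Fin (2 * d + 1), f i.val := by
      refine Finset.prod_congr rfl fun i _ => ?_
      rw [hf]; simp only [i.isLt, dif_pos, Fin.eta]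
    rw [h1, Fin.prod_univ_eq_prod_range f (2 * d + 1), prod_split_aux d f]
    congr 1
    · set G : ℕ → ℝ≥0∞ := fun j => if h : j < d then
        B (g ⟨j, h⟩).1 * B (g ⟨j, h⟩).2 else 1 with hG
      have h2 : ∏ i : Fin d, (B (g i).1 * B (g i).2) = ∏ i : Fin d, G i.val := by
        refine Finset.prod_congr rfl fun i _ => ?_
        rw [hG]; simp only [i.isLt, dif_pos, Fin.eta]
      rw [h2, Fin.prod_univ_eq_prod_range G d]
      refine Finset.prod_congr rfl fun j hj => ?_
      rw [Finset.mem_range] at hj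
      rw [hf, hG]
      simp only [dif_pos hj, dif_pos (by omega : 2 * j + 1 < 2 * d + 1),
        dif_pos (by omega : 2 * j + 2 < 2 * d + 1)]
      rw [enc_odd d b g ⟨j, hj⟩, enc_even d b g ⟨j, hj⟩]
  -- measure via the product decomposition
  have hmes : ∀ (s : Set (Fin (2 * d + 1) → Bool)),
      μ s = ∑ t : Bool × (Fin d → Bool × Bool),
        (if enc d t.1 t.2 ∈ s then B t.1 * ∏ i : Fin d, (B (t.2 i).1 * B (t.2 i).2) else 0) := by
    intro s
    rw [hsum s, ← Equiv.sum_comp (encEquiv d)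
      (fun ω => if ω ∈ s then ∏ i, B (ω i) else 0)]
    refine Finset.sum_congr rfl fun t _ => ?_
    show (if enc d t.1 t.2 ∈ s then ∏ i, B (enc d t.1 t.2 i) else 0) = _
    by_cases h : enc d t.1 t.2 ∈ s <;> simp [h, hfact t.1 t.2]
  have hBtrue : B true = q := rfl
  have hBfalse : B false = 1 - q := rfl
  have hBsum : ∑ x : Bool, B x = 1 := by
    rw [Fintype.sum_bool, hBtrue, hBfalse]
    exact add_tsub_cancel_of_le hq1
  have hpair : ∑ x : Bool × Bool, B x.1 * B x.2 = 1 := by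
    rw [Fintype.sum_prod_type, ← Finset.sum_mul_sum, hBsum, one_mul]
  have hall : ∑ g : Fin d → Bool × Bool, ∏ i : Fin d, (B (g i).1 * B (g i).2) = 1 := by
    rw [← Fintype.sum_pow (fun x : Bool × Bool => B x.1 * B x.2) d, hpair, one_pow]
  have hgood : ∑ x : Bool × Bool, (if x.1 = true ∨ x.2 = true then B x.1 * B x.2 else 0)
      = ENNReal.ofReal (2 * p - p ^ 2) := by
    have h1 : ∑ x : Bool × Bool, (if x.1 = true ∨ x.2 = true then B x.1 * B x.2 else 0)
        = B true * B true + (B true * B false + B false * B true) := by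
      simp [Fintype.sum_prod_type]
      ring
    rw [h1, hBtrue, hBfalse, hone, hqdef,
      show ((2:ℝ) * p - p ^ 2) = p * p + (p * (1 - p) + (1 - p) * p) by ring,
      ENNReal.ofReal_add (by positivity) (by positivity),
      ENNReal.ofReal_add (by positivity) (by positivity),
      ENNReal.ofReal_mul hp0.le, ENNReal.ofReal_mul hp0.le, ENNReal.ofReal_mul h1p]
  -- membership in E
  have hEmem : ∀ (b : Bool) (g : Fin d → Bool × Bool), (enc d b g ∈ E) ↔
      ∀ i : Fin d, b = true ∨ (g i).1 = true ∨ (g i).2 = true := by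
    intro b g
    rw [hE]
    simp only [Set.mem_setOf_eq, enc_zero, enc_odd, enc_even]
  -- the measure of E
  have hmuE : μ E = q + (1 - q) * (ENNReal.ofReal (2 * p - p ^ 2)) ^ d := by
    rw [hmes E, Fintype.sum_prod_type, Fintype.sum_bool]
    have ht : (∑ g : Fin d → Bool × Bool, if enc d true g ∈ E then
        B true * ∏ i : Fin d, (B (g i).1 * B (g i).2) else 0) = q := by
      have hmemt : ∀ g : Fin d → Bool × Bool, enc d true g ∈ E :=
        fun g => (hEmem true g).mpr (fun i => Or.inl rfl)
      rw [Finset.sum_congr rfl (fun g _ => if_pos (hmemt g)), ← Finset.mul_sum, hall,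
        mul_one, hBtrue]
    have hft : (∑ g : Fin d → Bool × Bool, if enc d false g ∈ E then
        B false * ∏ i : Fin d, (B (g i).1 * B (g i).2) else 0)
        = (1 - q) * (ENNReal.ofReal (2 * p - p ^ 2)) ^ d := by
      have step : ∀ g : Fin d → Bool × Bool,
          (if enc d false g ∈ E then B false * ∏ i : Fin d, (B (g i).1 * B (g i).2) else 0)
          = B false * ∏ i : Fin d,
            (if (g i).1 = true ∨ (g i).2 = true then B (g i).1 * B (g i).2 else 0) := by
        intro g
        by_cases hg : ∀ i : Fin d, (g i).1 = true ∨ (g i).2 = true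
        · rw [if_pos ((hEmem false g).mpr (fun i => Or.inr (hg i)))]
          exact congrArg (B false * ·)
            (Finset.prod_congr rfl fun i _ => (if_pos (hg i)).symm)
        · rw [if_neg (fun hmem => hg fun i =>
            (((hEmem false g).mp hmem) i).resolve_left (by simp))]
          obtain ⟨i0, hi0⟩ := not_forall.mp hg
          rw [Finset.prod_eq_zero (Finset.mem_univ i0)
            (show (if (g i0).1 = true ∨ (g i0).2 = true then B (g i0).1 * B (g i0).2 else 0)
              = 0 from if_neg hi0), mul_zero]
      rw [Finset.sum_congr rfl (fun g _ => step g), ← Finset.mul_sum,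
        ← Fintype.sum_pow (fun x : Bool × Bool =>
          if x.1 = true ∨ x.2 = true then B x.1 * B x.2 else 0) d, hgood, hBfalse]
    rw [ht, hft]
  have part1 : μ E = ENNReal.ofReal (p + (1 - p) * (2 * p - p ^ 2) ^ d) := by
    rw [hmuE, hone, hqdef, ← ENNReal.ofReal_pow h2p, ← ENNReal.ofReal_mul h1p,
      ← ENNReal.ofReal_add hp0.le (mul_nonneg h1p (pow_nonneg h2p d))]
  have hmu0 : μ {ω | ω 0 = true} = q := by
    rw [hmes {ω | ω 0 = true}, Fintype.sum_prod_type, Fintype.sum_bool]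
    have hm : ∀ (b : Bool) (g : Fin d → Bool × Bool),
        (enc d b g ∈ {ω | ω 0 = true}) = (b = true) := by
      intro b g
      show (enc d b g 0 = true) = (b = true)
      rw [enc_zero]
    simp only [hm]
    rw [Finset.sum_congr rfl (fun g _ => if_pos trivial),
      Finset.sum_congr rfl (fun g _ => if_neg (by simp)),
      ← Finset.mul_sum, hall, mul_one, hBtrue, Finset.sum_const_zero, add_zero]
  have hApos : (0:ℝ) < p + (1 - p) * (2 * p - p ^ 2) ^ d :=
    add_pos_of_pos_of_nonneg hp0 (mul_nonneg h1p (pow_nonneg h2p d))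
  refine ⟨part1, ?_, ?_⟩
  · have hsub : {ω : Fin (2 * d + 1) → Bool | ω 0 = true} ⊆ E := by
      rw [hE]; intro ω hω i; exact Or.inl hω
    rw [ProbabilityTheory.cond_apply (hmeas E) μ, Set.inter_eq_self_of_subset_right hsub,
      hmu0, part1, hqdef, ENNReal.ofReal_div_of_pos hApos, div_eq_mul_inv, mul_comm]
  · rw [show p + (1 - p) * (2 * p - p ^ 2) ^ d
      = 1 + (1 - p) * ((2 * p - p ^ 2) ^ d - 1) by ring]
end

section
/- Fix p ∈ (0,1) and a natural number n ≥ 1, and define r : ℝ → ℝ by r(t) = (p^t·(1 − p)·(2 − p)^t + p) / ((2 − p)^t·(p^t·(1 − p) + p)) (real powers). Then the function F ↦ ((n + F)/n) · (r(F/n))^n tends to 0 as the real number F tends to +∞. In particular, for all sufficiently large F, ((n + F)/n)·(r(F/n))^n ≤ 1. -/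
open Filter Real

private lemma stmt15_aux (a : ℝ) {c : ℝ} (hc : 0 < c) :
    Tendsto (fun F : ℝ => (a + F) * Real.exp (-(c * F))) atTop (nhds 0) := by
  have h1 : Tendsto (fun x : ℝ => a * Real.exp (-x) + (1 / c) * (x ^ 1 * Real.exp (-x)))
      atTop (nhds 0) := by
    simpa using (Real.tendsto_exp_neg_atTop_nhds_zero.const_mul a).add
      ((Real.tendsto_pow_mul_exp_neg_atTop_nhds_zero 1).const_mul (1 / c))
  have h2 : Tendsto (fun F : ℝ => c * F) atTop atTop :=
    Tendsto.const_mul_atTop hc tendsto_id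
  have := h1.comp h2
  refine this.congr fun F => ?_
  have hc' : c ≠ 0 := ne_of_gt hc
  simp only [Function.comp_apply]
  field_simp

/-- For `p ∈ (0,1)`, `n ≥ 1`, and the per-node ratio
`r(t) = (p^t(1 − p)(2 − p)^t + p) / ((2 − p)^t(p^t(1 − p) + p))` (real powers),
the quantity `((n + F)/n)·(r(F/n))^n` tends to `0` as `F → +∞`; in particular it is
eventually at most `1`. -/
theorem stmt_15 (p : ℝ) (hp0 : 0 < p) (hp1 : p < 1) (n : ℕ) (hn : 1 ≤ n)
    (r : ℝ → ℝ)
    (hr : ∀ t : ℝ, r t = (p ^ t * (1 - p) * (2 - p) ^ t + p) /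
      ((2 - p) ^ t * (p ^ t * (1 - p) + p))) :
    Filter.Tendsto (fun F : ℝ => (((n : ℝ) + F) / (n : ℝ)) * (r (F / (n : ℝ))) ^ n)
      Filter.atTop (nhds 0) ∧
    ∀ᶠ F in Filter.atTop, (((n : ℝ) + F) / (n : ℝ)) * (r (F / (n : ℝ))) ^ n ≤ 1 := by
  have hn0 : (0:ℝ) < (n:ℝ) := by exact_mod_cast Nat.pos_of_ne_zero (by omega)
  have hb1 : (1:ℝ) < 2 - p := by linarith
  have hb0 : (0:ℝ) < 2 - p := by linarith
  have hc : 0 < Real.log (2 - p) := Real.log_pos hb1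
  -- positivity and bound on r for t ≥ 0
  have hrpos : ∀ t : ℝ, 0 < r t := by
    intro t
    rw [hr]
    have h1 : 0 < p ^ t := Real.rpow_pos_of_pos hp0 t
    have h2 : 0 < (2 - p) ^ t := Real.rpow_pos_of_pos hb0 t
    have h3 : 0 < 1 - p := by linarith
    positivity
  have hrle : ∀ t : ℝ, 0 ≤ t → r t ≤ 1 / (p * (2 - p) ^ t) := by
    intro t ht
    rw [hr]
    have h2 : 0 < (2 - p) ^ t := Real.rpow_pos_of_pos hb0 t
    have h3 : 0 < 1 - p := by linarith
    have hnum : p ^ t * (1 - p) * (2 - p) ^ t + p ≤ 1 := by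
      have : p ^ t * (2 - p) ^ t = (p * (2 - p)) ^ t :=
        (Real.mul_rpow hp0.le hb0.le).symm
      have ha1 : p * (2 - p) ≤ 1 := by nlinarith
      have ha0 : 0 ≤ p * (2 - p) := by positivity
      have : (p * (2 - p)) ^ t ≤ 1 := Real.rpow_le_one ha0 ha1 ht
      nlinarith [Real.rpow_pos_of_pos hp0 t, Real.rpow_pos_of_pos hb0 t]
    have hden : p * (2 - p) ^ t ≤ (2 - p) ^ t * (p ^ t * (1 - p) + p) := by
      have h1 : 0 < p ^ t := Real.rpow_pos_of_pos hp0 t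
      nlinarith [mul_nonneg (mul_nonneg h2.le h1.le) h3.le]
    have hdpos : 0 < p * (2 - p) ^ t := by positivity
    exact div_le_div₀ (by norm_num) hnum hdpos hden
  -- the dominating function
  have hg : Tendsto (fun F : ℝ => (1 / ((n:ℝ) * p ^ n)) *
      (((n:ℝ) + F) * Real.exp (-(Real.log (2 - p) * F)))) atTop (nhds 0) := by
    have := (stmt15_aux (n:ℝ) hc).const_mul (1 / ((n:ℝ) * p ^ n))
    simpa using this
  have hbound : ∀ᶠ F in atTop, (((n : ℝ) + F) / (n : ℝ)) * (r (F / (n : ℝ))) ^ n ≤ (1 / ((n:ℝ) * p ^ n)) *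
      (((n:ℝ) + F) * Real.exp (-(Real.log (2 - p) * F))) := by
    filter_upwards [eventually_ge_atTop (0:ℝ)] with F hF
    have ht : (0:ℝ) ≤ F / n := div_nonneg hF hn0.le
    have hrF := hrle _ ht
    have hr0 := (hrpos (F / n)).le
    have hpow : (r (F / n)) ^ n ≤ (1 / (p * (2 - p) ^ (F / (n:ℝ)))) ^ n :=
      pow_le_pow_left₀ hr0 hrF n
    have hfac : 0 ≤ ((n:ℝ) + F) / n := by positivity
    have key : (1 / (p * (2 - p) ^ (F / (n:ℝ)))) ^ n
        = 1 / (p ^ n * Real.exp (Real.log (2 - p) * F)) := by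
      rw [div_pow, one_pow, mul_pow, ← Real.rpow_natCast ((2 - p) ^ (F / (n:ℝ))) n,
        ← Real.rpow_mul hb0.le, div_mul_cancel₀ _ (ne_of_gt hn0),
        Real.rpow_def_of_pos hb0]
    calc (((n : ℝ) + F) / n) * (r (F / n)) ^ n
        ≤ (((n : ℝ) + F) / n) * (1 / (p ^ n * Real.exp (Real.log (2 - p) * F))) := by
          rw [← key]; exact mul_le_mul_of_nonneg_left hpow hfac
      _ = (1 / ((n:ℝ) * p ^ n)) * (((n:ℝ) + F) * Real.exp (-(Real.log (2 - p) * F))) := by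
          rw [Real.exp_neg]
          field_simp
  have hnonneg : ∀ᶠ F in atTop, 0 ≤ (((n : ℝ) + F) / (n : ℝ)) * (r (F / (n : ℝ))) ^ n := by
    filter_upwards [eventually_ge_atTop (0:ℝ)] with F hF
    have := (hrpos (F / n)).le
    positivity
  have hmain : Tendsto (fun F : ℝ => (((n : ℝ) + F) / (n : ℝ)) * (r (F / (n : ℝ))) ^ n)
      atTop (nhds 0) := squeeze_zero' hnonneg hbound hg
  refine ⟨hmain, ?_⟩
  have := hmain.eventually (ge_mem_nhds (show (0:ℝ) < 1 by norm_num))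
  exact this.mono fun F hF => hF
end
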